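/- If ‖·‖ is an L-norm on M_n(ℂ) with ω(A) ≤ ‖A‖ for all A (ω the numerical radius), then ‖A‖₁ ≤ ‖A‖ for all A; i.e., the trace norm is the minimum L-norm dominating the numerical radius norm. -/

import Mathlib

open Matrix BigOperators ComplexOrder

/-- Square complex matrices. -/
abbrev Mat (n : ℕ) := Matrix (Fin n) (Fin n) ℂ

/-- `N` is a norm on `Mat n`. -/
def IsMatrixNorm {n : ℕ} (N : Mat n → ℝ) : Prop :=
  (∀ A, N A = 0 ↔ A = 0) ∧
  (∀ (c : ℂ) (A : Mat n), N (c • A) = ‖c‖ * N A) ∧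
  (∀ A B : Mat n, N (A + B) ≤ N A + N B)

/-- A set of matrices is C*-convex. -/
def CStarConvex {n : ℕ} (K : Set (Mat n)) : Prop :=
  ∀ (k : ℕ) (C A : Fin k → Mat n), (∀ i, A i ∈ K) →
    (∑ i, (C i)ᴴ * C i = 1) → (∑ i, (C i)ᴴ * A i * C i) ∈ K

/-- `N` is an M-norm. -/
def IsMNorm {n : ℕ} (N : Mat n → ℝ) : Prop :=
  ∀ (k : ℕ) (C X : Fin k → Mat n), (∑ i, (C i)ᴴ * C i = 1) →
    N (∑ i, (C i)ᴴ * X i * C i) ≤ ⨆ i, N (X i)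

/-- `N` is an L-norm. -/
def IsLNorm {n : ℕ} (N : Mat n → ℝ) : Prop :=
  ∀ (k : ℕ) (C : Fin k → Mat n) (X : Mat n), (∑ i, (C i)ᴴ * C i = 1) →
    ∑ i, N (C i * X * (C i)ᴴ) ≤ N X

/-- The dual norm with respect to the pairing `⟨Y|X⟩ = Tr(Yᴴ X)`. -/
noncomputable def dualNorm {n : ℕ} (N : Mat n → ℝ) (Y : Mat n) : ℝ :=
  sSup {r | ∃ X : Mat n, N X ≤ 1 ∧ r = ‖(Yᴴ * X).trace‖}

/-- The operator (spectral) norm of a matrix. -/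
noncomputable def opNorm {n : ℕ} (A : Mat n) : ℝ :=
  ‖Matrix.toEuclideanCLM (𝕜 := ℂ) (n := Fin n) A‖

/-- The square root of a positive semidefinite matrix (as in the older Mathlib). -/
noncomputable def Matrix.PosSemidef.sqrt {n : ℕ} {A : Mat n} (hA : A.PosSemidef) : Mat n :=
  hA.1.eigenvectorUnitary.1 * diagonal ((↑) ∘ (√·) ∘ hA.1.eigenvalues) *
    (star hA.1.eigenvectorUnitary : Mat n)

/-- The trace norm `‖A‖₁ = Tr((AᴴA)^{1/2})`. -/
noncomputable def traceNorm {n : ℕ} (A : Mat n) : ℝ :=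
  ((Matrix.posSemidef_conjTranspose_mul_self A).sqrt).trace.re

/-- The numerical radius. -/
noncomputable def numRadius {n : ℕ} (A : Mat n) : ℝ :=
  sSup {r | ∃ x : EuclideanSpace ℂ (Fin n), ‖x‖ = 1 ∧
    r = ‖inner ℂ x (Matrix.toEuclideanCLM (𝕜 := ℂ) (n := Fin n) A x)‖}

/-! Pinching `A` with the rank-one projections `Pⱼ` onto an orthonormal basis `(bⱼ)` gives
`∑ⱼ ‖PⱼAPⱼ‖ ≤ ‖A‖` for an L-norm, and `PⱼAPⱼ = ⟨bⱼ, A bⱼ⟩ Pⱼ` with `‖Pⱼ‖ ≥ ω(Pⱼ) = 1`, so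
`∑ⱼ |⟨bⱼ, A bⱼ⟩| ≤ ‖A‖`. For the polar decomposition `A = U |A|` and an eigenbasis `(bⱼ)` of the
unitary `U`, `|⟨bⱼ, A bⱼ⟩| = ⟨bⱼ, |A| bⱼ⟩`, and these sum to `Tr |A| = ‖A‖₁`. -/

open scoped InnerProductSpace ComplexStarModule MatrixOrder
open Module

section OperatorTheory

variable {𝕜 E : Type*} [RCLike 𝕜] [NormedAddCommGroup E] [InnerProductSpace 𝕜 E]
  [CompleteSpace E]

theorem ContinuousLinearMap.norm_apply_eq_of_star_mul_self_eq {S T : E →L[𝕜] E}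
    (h : star S * S = star T * T) (x : E) : ‖S x‖ = ‖T x‖ := by
  have hsq : ‖S x‖ ^ 2 = ‖T x‖ ^ 2 := by
    rw [apply_norm_sq_eq_inner_adjoint_left, apply_norm_sq_eq_inner_adjoint_left]
    exact congrArg (fun R : E →L[𝕜] E => RCLike.re ⟪R x, x⟫_𝕜) h
  exact (sq_eq_sq₀ (norm_nonneg _) (norm_nonneg _)).1 hsq

theorem ContinuousLinearMap.norm_inner_apply_of_mem_unitary {U : E →L[𝕜] E}
    (hU : U ∈ unitary (E →L[𝕜] E)) {b : E} {c : 𝕜} (hb : U b = c • b) (x : E) :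
    ‖⟪b, U x⟫_𝕜‖ = ‖⟪b, x⟫_𝕜‖ := by
  rcases eq_or_ne b 0 with rfl | hb0
  · simp
  have hc : ‖c‖ = 1 := by
    have := norm_map_of_mem_unitary hU b
    rwa [hb, norm_smul, mul_eq_right₀ (norm_ne_zero_iff.mpr hb0)] at this
  rw [← inner_map_map_of_mem_unitary hU b x, hb, inner_smul_left, norm_mul, RCLike.norm_conj, hc,
    one_mul]

/-- Polar decomposition: `S x ↦ T x` is a well-defined isometry on the range of `S`, and any
isometry of a subspace extends to a unitary. -/
theorem ContinuousLinearMap.exists_mem_unitary_eq_mul_of_norm_apply_eq [FiniteDimensional 𝕜 E]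
    (S T : E →L[𝕜] E) (h : ∀ x, ‖S x‖ = ‖T x‖) : ∃ U ∈ unitary (E →L[𝕜] E), T = U * S := by
  have hker : LinearMap.ker (S : E →ₗ[𝕜] E) ≤ LinearMap.ker (T : E →ₗ[𝕜] E) := fun x hx => by
    simpa [← norm_eq_zero, ← h x] using hx
  set L₀ : LinearMap.range (S : E →ₗ[𝕜] E) →ₗ[𝕜] E :=
    (LinearMap.ker (S : E →ₗ[𝕜] E)).liftQ T hker ∘ₗ (S : E →ₗ[𝕜] E).quotKerEquivRange.symm
  have hL₀ (x : E) : L₀ ⟨S x, LinearMap.mem_range_self _ x⟩ = T x := by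
    simp only [L₀, LinearMap.comp_apply, LinearEquiv.coe_coe,
      ← ContinuousLinearMap.coe_coe S, LinearMap.quotKerEquivRange_symm_apply_image]
    rfl
  set L : LinearMap.range (S : E →ₗ[𝕜] E) →ₗᵢ[𝕜] E :=
    { L₀ with norm_map' := by rintro ⟨_, x, rfl⟩; exact (congrArg norm (hL₀ x)).trans (h x).symm }
  refine ⟨_, (Unitary.linearIsometryEquiv.symm (L.extend.toLinearIsometryEquiv rfl)).2,
    ContinuousLinearMap.ext fun x => ?_⟩
  exact ((L.extend_apply ⟨S x, LinearMap.mem_range_self _ x⟩).trans (hL₀ x)).symm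

end OperatorTheory

/-- A normal operator is diagonalised by the joint eigenspaces of its real and imaginary parts. -/
theorem ContinuousLinearMap.exists_orthonormalBasis_apply_eq_smul_of_isStarNormal
    {E : Type*} [NormedAddCommGroup E] [InnerProductSpace ℂ E] [FiniteDimensional ℂ E]
    [CompleteSpace E] {n : ℕ} (hn : finrank ℂ E = n) (T : E →L[ℂ] E) [IsStarNormal T] :
    ∃ (b : OrthonormalBasis (Fin n) ℂ E) (c : Fin n → ℂ), ∀ j, T (b j) = c j • b j := by
  classical
  set A : E →ₗ[ℂ] E := ((ℜ T : E →L[ℂ] E) : E →ₗ[ℂ] E)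
  set B : E →ₗ[ℂ] E := ((ℑ T : E →L[ℂ] E) : E →ₗ[ℂ] E)
  have hA : A.IsSymmetric := (ℜ T).2.isSymmetric
  have hB : B.IsSymmetric := (ℑ T).2.isSymmetric
  set V : ℂ × ℂ → Submodule ℂ E := fun μ => End.eigenspace A μ.2 ⊓ End.eigenspace B μ.1
  have hV : DirectSum.IsInternal V :=
    hA.directSum_isInternal_of_commute hB <|
      (Commute.realPart_imaginaryPart T).map ContinuousLinearMap.toLinearMapRingHom
  have : Fintype {μ // V μ ≠ ⊥} := hV.submodule_iSupIndep.fintypeNeBotOfFiniteDimensional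
  have hV' := DirectSum.isInternal_ne_bot_iff.mpr hV
  have horth : OrthogonalFamily ℂ (fun μ : {μ // V μ ≠ ⊥} => V μ) fun μ => (V μ).subtypeₗᵢ :=
    (hA.orthogonalFamily_eigenspace_inf_eigenspace hB).comp Subtype.val_injective
  set μ : Fin n → ℂ × ℂ := fun j => (hV'.subordinateOrthonormalBasisIndex hn j horth).1
  refine ⟨hV'.subordinateOrthonormalBasis hn horth, fun j => (μ j).2 + Complex.I * (μ j).1,
    fun j => ?_⟩
  obtain ⟨hbA, hbB⟩ := hV'.subordinateOrthonormalBasis_subordinate hn j horth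
  rw [SetLike.mem_coe, Module.End.mem_eigenspace_iff] at hbA hbB
  conv_lhs => rw [← realPart_add_I_smul_imaginaryPart T]
  change A _ + Complex.I • B _ = _
  rw [hbA, hbB, add_smul, mul_smul]

namespace Matrix

variable {n : ℕ}

theorem PosSemidef.sqrt_eq_cfcSqrt {A : Mat n} (hA : A.PosSemidef) : hA.sqrt = CFC.sqrt A := by
  rw [CFC.sqrt_eq_real_sqrt _ (nonneg_iff_posSemidef.2 hA), cfcₙ_eq_cfc, hA.1.cfc_eq]
  rfl

theorem PosSemidef.posSemidef_sqrt {A : Mat n} (hA : A.PosSemidef) : hA.sqrt.PosSemidef :=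
  nonneg_iff_posSemidef.1 (hA.sqrt_eq_cfcSqrt ▸ CFC.sqrt_nonneg A)

theorem PosSemidef.conjTranspose_sqrt_mul_sqrt {A : Mat n} (hA : A.PosSemidef) :
    hA.sqrtᴴ * hA.sqrt = A := by
  rw [hA.posSemidef_sqrt.1.eq, hA.sqrt_eq_cfcSqrt,
    CFC.sqrt_mul_sqrt_self _ (nonneg_iff_posSemidef.2 hA)]

theorem norm_toEuclideanCLM_sqrt_apply (A : Mat n) (x : EuclideanSpace ℂ (Fin n)) :
    ‖toEuclideanCLM (𝕜 := ℂ) (n := Fin n) (posSemidef_conjTranspose_mul_self A).sqrt x‖ =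
      ‖toEuclideanCLM (𝕜 := ℂ) (n := Fin n) A x‖ := by
  refine ContinuousLinearMap.norm_apply_eq_of_star_mul_self_eq ?_ x
  simp only [← map_star, ← map_mul, star_eq_conjTranspose,
    (posSemidef_conjTranspose_mul_self A).conjTranspose_sqrt_mul_sqrt]

theorem trace_eq_sum_inner_toEuclideanCLM (M : Mat n)
    (b : OrthonormalBasis (Fin n) ℂ (EuclideanSpace ℂ (Fin n))) :
    M.trace = ∑ j, ⟪b j, toEuclideanCLM (𝕜 := ℂ) (n := Fin n) M (b j)⟫_ℂ := by
  have := LinearMap.trace_eq_sum_inner (toEuclideanLin M) b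
  rwa [toEuclideanLin_eq_toLin_orthonormal, trace_toLin_eq] at this

end Matrix

theorem norm_inner_le_numRadius {n : ℕ} (A : Mat n) {x : EuclideanSpace ℂ (Fin n)}
    (hx : ‖x‖ = 1) : ‖⟪x, Matrix.toEuclideanCLM (𝕜 := ℂ) (n := Fin n) A x⟫_ℂ‖ ≤ numRadius A := by
  refine le_csSup ⟨‖Matrix.toEuclideanCLM (𝕜 := ℂ) (n := Fin n) A‖, ?_⟩ ⟨x, hx, rfl⟩
  rintro _ ⟨y, hy, rfl⟩
  simpa [hy] using norm_inner_le_norm (𝕜 := ℂ) y _ |>.trans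
    (mul_le_mul_of_nonneg_left ((Matrix.toEuclideanCLM (𝕜 := ℂ) (n := Fin n) A).le_opNorm y)
      (norm_nonneg y))

open InnerProductSpace in
theorem sum_norm_inner_le_of_isLNorm {n : ℕ} {N : Mat n → ℝ}
    (hsmul : ∀ (c : ℂ) (A : Mat n), N (c • A) = ‖c‖ * N A) (hL : IsLNorm N)
    (hω : ∀ A : Mat n, numRadius A ≤ N A)
    (b : OrthonormalBasis (Fin n) ℂ (EuclideanSpace ℂ (Fin n))) (A : Mat n) :
    ∑ j, ‖⟪b j, Matrix.toEuclideanCLM (𝕜 := ℂ) (n := Fin n) A (b j)⟫_ℂ‖ ≤ N A := by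
  set Φ := Matrix.toEuclideanCLM (𝕜 := ℂ) (n := Fin n)
  set R : Fin n → EuclideanSpace ℂ (Fin n) →L[ℂ] EuclideanSpace ℂ (Fin n) :=
    fun j => rankOne ℂ (b j) (b j)
  have hR (j : Fin n) : IsStarProjection (R j) := isStarProjection_rankOne_self (b.orthonormal.1 j)
  have hRH (j : Fin n) : (Φ.symm (R j))ᴴ = Φ.symm (R j) :=
    (Φ.symm.map_star' (R j)).symm.trans (congrArg Φ.symm (hR j).isSelfAdjoint.star_eq)
  have hsum : ∑ j, (Φ.symm (R j))ᴴ * Φ.symm (R j) = 1 := by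
    simp only [hRH, ← map_mul, (hR _).isIdempotentElem.eq, ← map_sum, R, b.sum_rankOne_eq_id]
    exact map_one _
  have hpinch (j : Fin n) :
      Φ.symm (R j) * A * (Φ.symm (R j))ᴴ = ⟪b j, Φ A (b j)⟫_ℂ • Φ.symm (R j) := by
    rw [hRH]
    conv_lhs => rw [← Φ.symm_apply_apply A]
    rw [← map_mul, ← map_mul, ← map_smul]
    congr 1
    ext x
    simp [R, smul_smul, mul_comm]
  have hNR (j : Fin n) : 1 ≤ N (Φ.symm (R j)) := by
    refine le_trans ?_ ((norm_inner_le_numRadius _ (b.orthonormal.1 j)).trans (hω _))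
    simp [Φ, R]
  calc ∑ j, ‖⟪b j, Φ A (b j)⟫_ℂ‖
      ≤ ∑ j, ‖⟪b j, Φ A (b j)⟫_ℂ‖ * N (Φ.symm (R j)) :=
        Finset.sum_le_sum fun j _ => le_mul_of_one_le_right (norm_nonneg _) (hNR j)
    _ = ∑ j, N (Φ.symm (R j) * A * (Φ.symm (R j))ᴴ) := by simp only [hpinch, hsmul]
    _ ≤ N A := hL n _ A hsum

theorem exists_orthonormalBasis_traceNorm_eq_sum_norm_inner {n : ℕ} (A : Mat n) :
    ∃ b : OrthonormalBasis (Fin n) ℂ (EuclideanSpace ℂ (Fin n)),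
      traceNorm A = ∑ j, ‖⟪b j, Matrix.toEuclideanCLM (𝕜 := ℂ) (n := Fin n) A (b j)⟫_ℂ‖ := by
  set Φ := Matrix.toEuclideanCLM (𝕜 := ℂ) (n := Fin n)
  have hA := Matrix.posSemidef_conjTranspose_mul_self A
  obtain ⟨U, hU, hUP⟩ := (Φ hA.sqrt).exists_mem_unitary_eq_mul_of_norm_apply_eq (Φ A)
    (Matrix.norm_toEuclideanCLM_sqrt_apply A)
  have := isStarNormal_of_mem_unitary hU
  obtain ⟨b, c, hb⟩ := U.exists_orthonormalBasis_apply_eq_smul_of_isStarNormal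
    (finrank_euclideanSpace_fin (𝕜 := ℂ))
  have hP : (Φ hA.sqrt).IsPositive := by
    rw [← ContinuousLinearMap.isPositive_toLinearMap_iff,
      Matrix.coe_toEuclideanCLM_eq_toEuclideanLin, Matrix.isPositive_toEuclideanLin_iff]
    exact hA.posSemidef_sqrt
  refine ⟨b, ?_⟩
  calc traceNorm A = (∑ j, ⟪b j, Φ hA.sqrt (b j)⟫_ℂ).re := by
        rw [traceNorm, Matrix.trace_eq_sum_inner_toEuclideanCLM _ b]
    _ = ∑ j, ‖⟪b j, Φ hA.sqrt (b j)⟫_ℂ‖ := by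
        rw [Complex.re_sum]
        exact Finset.sum_congr rfl fun j _ => by
          rw [← Complex.ofReal_re (‖_‖), Complex.norm_of_nonneg' (hP.inner_nonneg_right _)]
    _ = ∑ j, ‖⟪b j, Φ A (b j)⟫_ℂ‖ := by
        rw [hUP]
        exact Finset.sum_congr rfl fun j _ => (U.norm_inner_apply_of_mem_unitary hU (hb j) _).symm

theorem traceNorm_min_LNorm_above_numRadius {n : ℕ} (N : Mat n → ℝ)
    (hN : IsMatrixNorm N) (hL : IsLNorm N)
    (hω : ∀ A : Mat n, numRadius A ≤ N A) :
    ∀ A : Mat n, traceNorm A ≤ N A := by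
  intro A
  obtain ⟨b, hb⟩ := exists_orthonormalBasis_traceNorm_eq_sum_norm_inner A
  exact hb ▸ sum_norm_inner_le_of_isLNorm hN.2.1 hL hω b A
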